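/- arXiv:1605.01322 — 2 statements merged into one kernel-verified Lean document; each statement's English description precedes it below -/
import Mathlib

section
/- For any finite abstract simplicial complex K, the simplicial LS-category scat K is strictly less than the number of vertices of the core K₀ of K, and also strictly less than the number of maximal simplices of K₀. -/
/-- An abstract simplicial complex on a vertex type `V`:
a downward-closed family of nonempty finite sets of vertices. -/
structure AbsSC (V : Type) where
  faces : Set (Finset V)
  nonempty_of_mem : ∀ σ ∈ faces, σ.Nonempty
  down_closed : ∀ σ ∈ faces, ∀ τ : Finset V, τ ⊆ σ → τ.Nonempty → τ ∈ faces

namespace AbsSC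

variable {V W V' W' : Type} [DecidableEq V] [DecidableEq W]

/-- `f` is a simplicial map from `K` to `L`. -/
def IsSimplicial (K : AbsSC V) (L : AbsSC W) (f : V → W) : Prop :=
  ∀ σ ∈ K.faces, σ.image f ∈ L.faces

/-- Two simplicial maps are contiguous. -/
def Contig (K : AbsSC V) (L : AbsSC W) (f g : V → W) : Prop :=
  IsSimplicial K L f ∧ IsSimplicial K L g ∧
    ∀ σ ∈ K.faces, σ.image f ∪ σ.image g ∈ L.faces

/-- Two maps are in the same contiguity class: they are connected by a
finite chain of pairwise contiguous simplicial maps. -/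
def ContigClass (K : AbsSC V) (L : AbsSC W) : (V → W) → (V → W) → Prop :=
  Relation.ReflTransGen (Contig K L)

/-- `U` is a categorical subcomplex of `K`: the inclusion is in the
contiguity class of a constant map onto a vertex of `K`. -/
def Categorical (K U : AbsSC V) : Prop :=
  U.faces ⊆ K.faces ∧ ∃ v : V, {v} ∈ K.faces ∧ ContigClass U K id (fun _ => v)

/-- `K` is covered by `n+1` categorical subcomplexes. -/
def CatCover (K : AbsSC V) (n : ℕ) : Prop :=
  ∃ U : Fin (n + 1) → AbsSC V, (∀ i, Categorical K (U i)) ∧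
    ∀ σ ∈ K.faces, ∃ i, σ ∈ (U i).faces

/-- The simplicial Lusternik–Schnirelmann category of `K`. -/
noncomputable def scat (K : AbsSC V) : ℕ := sInf {n | CatCover K n}

/-- A maximal simplex of `K`. -/
def MaximalFace (K : AbsSC V) (σ : Finset V) : Prop :=
  σ ∈ K.faces ∧ ∀ τ ∈ K.faces, σ ⊆ τ → σ = τ

/-- The vertex `v` is dominated (by some other vertex `v'`). -/
def Dominated (K : AbsSC V) (v : V) : Prop :=
  ∃ v' : V, v' ≠ v ∧ {v} ∈ K.faces ∧ {v'} ∈ K.faces ∧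
    ∀ σ : Finset V, MaximalFace K σ → v ∈ σ → v' ∈ σ

/-- A minimal complex: no vertex is dominated. -/
def Minimal (K : AbsSC V) : Prop := ∀ v : V, ¬ Dominated K v

/-- Deleting (the open star of) a vertex. -/
def delete (K : AbsSC V) (v : V) : AbsSC V where
  faces := {σ ∈ K.faces | v ∉ σ}
  nonempty_of_mem := fun σ h => K.nonempty_of_mem σ h.1
  down_closed := fun σ h τ hτ hne =>
    ⟨K.down_closed σ h.1 τ hτ hne, fun hv => h.2 (hτ hv)⟩

/-- An elementary strong collapse: removal of the open star of a dominated vertex. -/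
def ElemStrongCollapse (K L : AbsSC V) : Prop :=
  ∃ v : V, Dominated K v ∧ L = K.delete v

/-- A complex consisting of a single vertex. -/
def IsPoint (K : AbsSC V) : Prop := ∃ v : V, K.faces = {{v}}

/-- `K` is strongly collapsible: it reduces to a single vertex by a
sequence of elementary strong collapses. -/
def StronglyCollapsible (K : AbsSC V) : Prop :=
  ∃ L : AbsSC V, Relation.ReflTransGen ElemStrongCollapse K L ∧ IsPoint L

/-- `K` is covered by `n+1` subcomplexes, each strongly collapsible in itself. -/
def GCatCover (K : AbsSC V) (n : ℕ) : Prop :=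
  ∃ U : Fin (n + 1) → AbsSC V,
    (∀ i, (U i).faces ⊆ K.faces ∧ StronglyCollapsible (U i)) ∧
    ∀ σ ∈ K.faces, ∃ i, σ ∈ (U i).faces

/-- The geometric simplicial category of `K`. -/
noncomputable def gscat (K : AbsSC V) : ℕ := sInf {n | GCatCover K n}

/-- Strong homotopy equivalence of complexes. -/
def StrongEquiv (K : AbsSC V) (L : AbsSC W) : Prop :=
  ∃ (φ : V → W) (ψ : W → V), IsSimplicial K L φ ∧ IsSimplicial L K ψ ∧
    ContigClass K K (ψ ∘ φ) id ∧ ContigClass L L (φ ∘ ψ) id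

/-- The barycentric subdivision: vertices are the simplices of `K`,
simplices are the chains of simplices of `K`. -/
def sd (K : AbsSC V) : AbsSC (Finset V) where
  faces := {S | S.Nonempty ∧ (∀ σ ∈ S, σ ∈ K.faces) ∧
    ∀ σ ∈ S, ∀ τ ∈ S, σ ⊆ τ ∨ τ ⊆ σ}
  nonempty_of_mem := fun S hS => hS.1
  down_closed := fun S hS T hTS hT =>
    ⟨hT, fun σ hσ => hS.2.1 σ (hTS hσ),
      fun σ hσ τ hτ => hS.2.2 σ (hTS hσ) τ (hTS hτ)⟩

/-- The categorical product of simplicial complexes. -/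
def prod (K : AbsSC V) (L : AbsSC W) : AbsSC (V × W) where
  faces := {σ | σ.Nonempty ∧ σ.image Prod.fst ∈ K.faces ∧ σ.image Prod.snd ∈ L.faces}
  nonempty_of_mem := fun σ h => h.1
  down_closed := fun σ h τ hτ hne =>
    ⟨hne, K.down_closed _ h.2.1 _ (Finset.image_subset_image hτ) (hne.image _),
      L.down_closed _ h.2.2 _ (Finset.image_subset_image hτ) (hne.image _)⟩

/-- The `n`-fold categorical power of `K`. -/
def power (K : AbsSC V) (n : ℕ) : AbsSC (Fin n → V) where
  faces := {σ | σ.Nonempty ∧ ∀ j : Fin n, σ.image (fun f => f j) ∈ K.faces}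
  nonempty_of_mem := fun σ h => h.1
  down_closed := by
    intro σ h τ hτ hne
    exact ⟨hne, fun j => K.down_closed _ (h.2 j) _ (Finset.image_subset_image hτ) (hne.image _)⟩

/-- The `n`-th fat wedge of a pointed complex `(K, v₀)` inside `Kⁿ`. -/
def fatWedge (K : AbsSC V) (n : ℕ) (v₀ : V) : AbsSC (Fin n → V) where
  faces := {σ | σ ∈ (K.power n).faces ∧ ∃ j : Fin n, ∀ f ∈ σ, f j = v₀}
  nonempty_of_mem := fun σ h => (K.power n).nonempty_of_mem σ h.1
  down_closed := fun σ h τ hτ hne =>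
    ⟨(K.power n).down_closed σ h.1 τ hτ hne,
      h.2.imp fun j hj f hf => hj f (hτ hf)⟩

/-- The part of a set of vertices of a disjoint union lying in the left factor. -/
noncomputable def sumLeft (σ : Finset (V ⊕ W)) : Finset V :=
  σ.preimage Sum.inl Sum.inl_injective.injOn

/-- The part of a set of vertices of a disjoint union lying in the right factor. -/
noncomputable def sumRight (σ : Finset (V ⊕ W)) : Finset W :=
  σ.preimage Sum.inr Sum.inr_injective.injOn

/-- The simplicial join `K ∗ L`. -/
def join (K : AbsSC V) (L : AbsSC W) : AbsSC (V ⊕ W) where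
  faces := {σ | σ.Nonempty ∧ ((sumLeft σ).Nonempty → sumLeft σ ∈ K.faces) ∧
    ((sumRight σ).Nonempty → sumRight σ ∈ L.faces)}
  nonempty_of_mem := fun σ h => h.1
  down_closed := by
    intro σ h τ hτ hne
    have hl : sumLeft τ ⊆ sumLeft σ := fun x hx => by
      rw [sumLeft, Finset.mem_preimage] at *; exact hτ hx
    have hr : sumRight τ ⊆ sumRight σ := fun x hx => by
      rw [sumRight, Finset.mem_preimage] at *; exact hτ hx
    exact ⟨hne,
      fun h1 => K.down_closed _ (h.2.1 (h1.mono hl)) _ hl h1,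
      fun h1 => L.down_closed _ (h.2.2 (h1.mono hr)) _ hr h1⟩

/-- A graph: a simplicial complex of dimension at most 1. -/
def IsGraph (G : AbsSC V) : Prop := ∀ σ ∈ G.faces, σ.card ≤ 2

/-- A connected (nonempty) complex: any two vertices are joined by an edge path. -/
def ConnectedG (G : AbsSC V) : Prop :=
  G.faces.Nonempty ∧
    ∀ u v : V, {u} ∈ G.faces → {v} ∈ G.faces →
      ∃ (n : ℕ) (p : Fin (n + 1) → V), p 0 = u ∧ p (Fin.last n) = v ∧
        ∀ i : Fin n, ({p i.castSucc, p i.succ} : Finset V) ∈ G.faces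

/-- A cycle of length `n` in a graph: `n ≥ 3` distinct vertices joined cyclically by edges. -/
def IsCycle (G : AbsSC V) (n : ℕ) (p : ZMod n → V) : Prop :=
  3 ≤ n ∧ Function.Injective p ∧
    ∀ i : ZMod n, ({p i, p (i + 1)} : Finset V) ∈ G.faces

/-- A forest: a graph containing no cycle. -/
def IsForest (G : AbsSC V) : Prop := ∀ (n : ℕ) (p : ZMod n → V), ¬ IsCycle G n p

/-- A tree: a connected forest. -/
def IsTree (G : AbsSC V) : Prop := IsForest G ∧ ConnectedG G

/-- A decomposition of a graph into `k` edge-disjoint spanning forests. -/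
def EdgeDisjointForestDecomp (G : AbsSC V) (k : ℕ) : Prop :=
  ∃ F : Fin k → AbsSC V,
    (∀ i, (F i).faces ⊆ G.faces ∧ IsForest (F i) ∧
      ∀ v : V, {v} ∈ G.faces → {v} ∈ (F i).faces) ∧
    (∀ σ ∈ G.faces, ∃ i, σ ∈ (F i).faces) ∧
    ∀ (i j : Fin k) (σ : Finset V), σ.card = 2 →
      σ ∈ (F i).faces → σ ∈ (F j).faces → i = j

/-- The arboricity of a graph. -/
noncomputable def arboricity (G : AbsSC V) : ℕ :=
  sInf {k | EdgeDisjointForestDecomp G k}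

end AbsSC

/-!
Pulling a categorical cover of `K₀` back along the simplicial map `φ : K → K₀` gives a
categorical cover of `K`: a piece that `φ` sends into a categorical `U ⊆ K₀` has its inclusion
contiguous, via `ψ ∘ φ ~ id`, to `ψ` composed with a constant map. Such covers of `K₀` are given
by the closed stars of its vertices and by its maximal simplices, each of which lies in the star
of any of its vertices, hence is categorical.
-/

namespace AbsSC

variable {V V' W : Type}

section Contiguity

variable [DecidableEq V'] [DecidableEq W]

theorem Contig.symm {K : AbsSC V} {L : AbsSC W} {f g : V → W} (h : Contig K L f g) :
    Contig K L g f :=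
  ⟨h.2.1, h.1, fun σ hσ => Finset.union_comm (σ.image f) _ ▸ h.2.2 σ hσ⟩

theorem ContigClass.symm {K : AbsSC V} {L : AbsSC W} {f g : V → W}
    (h : ContigClass K L f g) : ContigClass K L g f :=
  have : Std.Symm (Contig K L) := ⟨fun _ _ => Contig.symm⟩
  Relation.ReflTransGen.stdSymm.symm _ _ h

theorem ContigClass.mono {K U : AbsSC V} {L : AbsSC W} (hU : U.faces ⊆ K.faces)
    {f g : V → W} (h : ContigClass K L f g) : ContigClass U L f g :=
  Relation.ReflTransGen.mono (fun _ _ hfg =>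
    ⟨fun σ hσ => hfg.1 σ (hU hσ), fun σ hσ => hfg.2.1 σ (hU hσ),
      fun σ hσ => hfg.2.2 σ (hU hσ)⟩) _ _ h

theorem Contig.comp_left {U : AbsSC V} {L : AbsSC V'} {M : AbsSC W}
    {ψ : V' → W} (hψ : IsSimplicial L M ψ) {f g : V → V'} (h : Contig U L f g) :
    Contig U M (ψ ∘ f) (ψ ∘ g) := by
  refine ⟨fun σ hσ => ?_, fun σ hσ => ?_, fun σ hσ => ?_⟩
  · rw [← Finset.image_image]; exact hψ _ (h.1 σ hσ)
  · rw [← Finset.image_image]; exact hψ _ (h.2.1 σ hσ)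
  · simpa only [Finset.image_union, Finset.image_image] using hψ _ (h.2.2 σ hσ)

theorem ContigClass.comp_left {U : AbsSC V} {L : AbsSC V'} {M : AbsSC W}
    {ψ : V' → W} (hψ : IsSimplicial L M ψ) {f g : V → V'} (h : ContigClass U L f g) :
    ContigClass U M (ψ ∘ f) (ψ ∘ g) :=
  Relation.ReflTransGen.lift (ψ ∘ ·) (fun _ _ hfg => hfg.comp_left hψ) _ _ h

theorem Contig.comp_right {N : AbsSC V} {U : AbsSC V'} {L : AbsSC W}
    {φ : V → V'} (hφ : IsSimplicial N U φ) {f g : V' → W} (h : Contig U L f g) :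
    Contig N L (f ∘ φ) (g ∘ φ) := by
  refine ⟨fun σ hσ => ?_, fun σ hσ => ?_, fun σ hσ => ?_⟩
  · rw [← Finset.image_image]; exact h.1 _ (hφ σ hσ)
  · rw [← Finset.image_image]; exact h.2.1 _ (hφ σ hσ)
  · simpa only [Finset.image_image] using h.2.2 _ (hφ σ hσ)

theorem ContigClass.comp_right {N : AbsSC V} {U : AbsSC V'} {L : AbsSC W}
    {φ : V → V'} (hφ : IsSimplicial N U φ) {f g : V' → W} (h : ContigClass U L f g) :
    ContigClass N L (f ∘ φ) (g ∘ φ) :=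
  Relation.ReflTransGen.lift (· ∘ φ) (fun _ _ hfg => hfg.comp_right hφ) _ _ h

end Contiguity

section Cover

variable [DecidableEq V] [DecidableEq V']

def comap (K : AbsSC V) (U : AbsSC V') (φ : V → V') : AbsSC V where
  faces := {σ | σ ∈ K.faces ∧ σ.image φ ∈ U.faces}
  nonempty_of_mem σ h := K.nonempty_of_mem σ h.1
  down_closed σ h τ hτ hne :=
    ⟨K.down_closed σ h.1 τ hτ hne,
      U.down_closed _ h.2 _ (Finset.image_subset_image hτ) (hne.image _)⟩

theorem Categorical.comap {K : AbsSC V} {L U : AbsSC V'} {φ : V → V'} {ψ : V' → V}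
    (hψ : IsSimplicial L K ψ) (hψφ : ContigClass K K (ψ ∘ φ) id) (hU : Categorical L U) :
    Categorical K (K.comap U φ) := by
  obtain ⟨-, v, hv, hUv⟩ := hU
  have hsub : (K.comap U φ).faces ⊆ K.faces := fun σ hσ => hσ.1
  refine ⟨hsub, ψ v, by simpa only [Finset.image_singleton] using hψ _ hv, ?_⟩
  have hφ : IsSimplicial (K.comap U φ) U φ := fun σ hσ => hσ.2
  exact (hψφ.mono hsub).symm.trans ((hUv.comp_right hφ).comp_left hψ)

theorem CatCover.of_comp_contigClass_id {K : AbsSC V} {L : AbsSC V'} {φ : V → V'}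
    {ψ : V' → V} (hφ : IsSimplicial K L φ) (hψ : IsSimplicial L K ψ)
    (hψφ : ContigClass K K (ψ ∘ φ) id) {n : ℕ} (h : CatCover L n) : CatCover K n := by
  obtain ⟨U, hcat, hcov⟩ := h
  refine ⟨fun i => K.comap (U i) φ, fun i => (hcat i).comap hψ hψφ, fun σ hσ => ?_⟩
  obtain ⟨i, hi⟩ := hcov _ (hφ σ hσ)
  exact ⟨i, hσ, hi⟩

theorem catCover_ncard_sub_one {α : Type} {K : AbsSC V} {s : Set α} (hs : s.Finite)
    (hne : s.Nonempty) (U : α → AbsSC V) (hcat : ∀ a ∈ s, Categorical K (U a))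
    (hcov : ∀ σ ∈ K.faces, ∃ a ∈ s, σ ∈ (U a).faces) : CatCover K (s.ncard - 1) := by
  have : Finite s := hs
  have hcard : s.ncard - 1 + 1 = Nat.card s := by
    rw [Nat.card_coe_set_eq, Nat.sub_add_cancel ((Set.ncard_pos hs).2 hne)]
  let e : Fin (s.ncard - 1 + 1) ≃ s := (finCongr hcard).trans (Finite.equivFin s).symm
  refine ⟨fun i => U (e i), fun i => hcat _ (e i).2, fun σ hσ => ?_⟩
  obtain ⟨a, ha, hσ⟩ := hcov σ hσ
  exact ⟨e.symm ⟨a, ha⟩, by simpa only [Equiv.apply_symm_apply] using hσ⟩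

end Cover

section Faces

variable {K : AbsSC V}

def vertices (K : AbsSC V) : Set V := {v | {v} ∈ K.faces}

def maximalFaces (K : AbsSC V) : Set (Finset V) := {σ | MaximalFace K σ}

theorem mem_vertices_of_mem {σ : Finset V} (hσ : σ ∈ K.faces) {v : V} (hv : v ∈ σ) :
    v ∈ K.vertices :=
  K.down_closed σ hσ {v} (Finset.singleton_subset_iff.2 hv) (Finset.singleton_nonempty v)

theorem maximalFace_iff {σ : Finset V} : MaximalFace K σ ↔ Maximal (· ∈ K.faces) σ :=
  and_congr_right fun _ => forall₂_congr fun _ _ =>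
    ⟨fun h hστ => (h hστ).ge, fun h hστ => hστ.antisymm (h hστ)⟩

theorem exists_maximalFace_superset [Finite V] {τ : Finset V} (hτ : τ ∈ K.faces) :
    ∃ σ ∈ K.maximalFaces, τ ⊆ σ := by
  obtain ⟨σ, hτσ, hσ⟩ := K.faces.toFinite.exists_le_maximal hτ
  exact ⟨σ, maximalFace_iff.2 hσ, hτσ⟩

theorem vertices_nonempty (hK : K.faces.Nonempty) : K.vertices.Nonempty := by
  obtain ⟨σ, hσ⟩ := hK
  obtain ⟨v, hv⟩ := K.nonempty_of_mem σ hσ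
  exact ⟨v, mem_vertices_of_mem hσ hv⟩

theorem maximalFaces_nonempty [Finite V] (hK : K.faces.Nonempty) :
    K.maximalFaces.Nonempty := by
  obtain ⟨σ, hσ⟩ := hK
  obtain ⟨ρ, hρ, -⟩ := exists_maximalFace_superset hσ
  exact ⟨ρ, hρ⟩

end Faces

section Stars

variable [DecidableEq V] {K : AbsSC V}

def star (K : AbsSC V) (v : V) : AbsSC V where
  faces := {σ | σ ∈ K.faces ∧ insert v σ ∈ K.faces}
  nonempty_of_mem σ h := K.nonempty_of_mem σ h.1
  down_closed σ h τ hτ hne :=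
    ⟨K.down_closed σ h.1 τ hτ hne,
      K.down_closed _ h.2 _ (Finset.insert_subset_insert v hτ) (Finset.insert_nonempty v τ)⟩

theorem categorical_of_subset_star {U : AbsSC V} {v : V} (hv : v ∈ K.vertices)
    (hU : U.faces ⊆ (K.star v).faces) : Categorical K U := by
  refine ⟨fun σ hσ => (hU hσ).1, v, hv, .single ⟨fun σ hσ => ?_, fun σ hσ => ?_, fun σ hσ => ?_⟩⟩
  · rw [Finset.image_id]; exact (hU hσ).1
  · rw [Finset.image_const (U.nonempty_of_mem σ hσ)]; exact hv
  · rw [Finset.image_id, Finset.image_const (U.nonempty_of_mem σ hσ), Finset.union_singleton]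
    exact (hU hσ).2

theorem categorical_star {v : V} (hv : v ∈ K.vertices) : Categorical K (K.star v) :=
  categorical_of_subset_star hv subset_rfl

def closedFace (K : AbsSC V) (s : Finset V) : AbsSC V where
  faces := {σ | σ ∈ K.faces ∧ σ ⊆ s}
  nonempty_of_mem σ h := K.nonempty_of_mem σ h.1
  down_closed σ h τ hτ hne := ⟨K.down_closed σ h.1 τ hτ hne, hτ.trans h.2⟩

theorem categorical_closedFace {s : Finset V} (hs : s ∈ K.faces) :
    Categorical K (K.closedFace s) := by
  obtain ⟨v, hv⟩ := K.nonempty_of_mem s hs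
  refine categorical_of_subset_star (mem_vertices_of_mem hs hv) fun σ hσ => ⟨hσ.1, ?_⟩
  exact K.down_closed s hs _ (Finset.insert_subset hv hσ.2) (Finset.insert_nonempty v σ)

variable [Finite V]

theorem catCover_vertices (hK : K.faces.Nonempty) : CatCover K (K.vertices.ncard - 1) := by
  refine catCover_ncard_sub_one K.vertices.toFinite (vertices_nonempty hK) K.star
    (fun _ => categorical_star) fun τ hτ => ?_
  obtain ⟨w, hw⟩ := K.nonempty_of_mem τ hτ
  exact ⟨w, mem_vertices_of_mem hτ hw, hτ, by rwa [Finset.insert_eq_self.2 hw]⟩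

theorem catCover_maximalFaces (hK : K.faces.Nonempty) :
    CatCover K (K.maximalFaces.ncard - 1) := by
  refine catCover_ncard_sub_one K.maximalFaces.toFinite (maximalFaces_nonempty hK)
    K.closedFace (fun s hs => categorical_closedFace hs.1) fun τ hτ => ?_
  obtain ⟨s, hs, hτs⟩ := exists_maximalFace_superset hτ
  exact ⟨s, hs, hτ, hτs⟩

end Stars

end AbsSC

theorem scat_lt_core_bounds_general {V : Type} [DecidableEq V] [Fintype V]
    (K K₀ : AbsSC V) (hne : K.faces.Nonempty) (heq : AbsSC.StrongEquiv K K₀) :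
    AbsSC.scat K < {v : V | ({v} : Finset V) ∈ K₀.faces}.ncard ∧
    AbsSC.scat K < {σ : Finset V | AbsSC.MaximalFace K₀ σ}.ncard := by
  obtain ⟨φ, ψ, hφ, hψ, hψφ, -⟩ := heq
  have hK₀ : K₀.faces.Nonempty := ⟨_, hφ _ hne.some_mem⟩
  have scat_lt {α : Type} [Finite α] {s : Set α} (h : AbsSC.CatCover K₀ (s.ncard - 1))
      (hs : s.Nonempty) : AbsSC.scat K < s.ncard :=
    (Nat.sInf_le (h.of_comp_contigClass_id hφ hψ hψφ)).trans_lt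
      (Nat.sub_lt ((Set.ncard_pos s.toFinite).2 hs) one_pos)
  exact ⟨scat_lt (AbsSC.catCover_vertices hK₀) (AbsSC.vertices_nonempty hK₀),
    scat_lt (AbsSC.catCover_maximalFaces hK₀) (AbsSC.maximalFaces_nonempty hK₀)⟩

/-- `scat K` is strictly less than the number of vertices and
the number of maximal simplices of the core `K₀` of `K`. -/
theorem scat_lt_core_bounds {V : Type} [DecidableEq V] [Fintype V]
    (K K₀ : AbsSC V) (hne : K.faces.Nonempty) (hsub : K₀.faces ⊆ K.faces)
    (hmin : AbsSC.Minimal K₀) (heq : AbsSC.StrongEquiv K K₀) :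
    AbsSC.scat K < {v : V | ({v} : Finset V) ∈ K₀.faces}.ncard ∧
    AbsSC.scat K < {σ : Finset V | AbsSC.MaximalFace K₀ σ}.ncard :=
  scat_lt_core_bounds_general K K₀ hne heq
end

section
/- For finite simplicial complexes K and L, scat(K × L) + 1 ≤ (scat K + 1)(scat L + 1), where K × L denotes the categorical product of simplicial complexes. -/
/-!
Categorical subcomplexes are closed under products: a chain of contiguities from the inclusion
of `A` to a constant in `K`, followed by one from the inclusion of `B` to a constant in `L`,
run one factor at a time, contracts the inclusion of `A × B` into `K × L` to a vertex.
Hence from categorical covers `U₀, …, Uₘ` of `K` and `U'₀, …, U'ₙ` of `L` the products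
`Uᵢ × U'ⱼ` form a categorical cover of `K × L` with `(m + 1)(n + 1)` members, because the
two projections of a simplex of `K × L` are simplices of `K` and `L`.
-/

namespace AbsSC

variable {V W V' W' : Type}

lemma IsSimplicial.contig_self {K : AbsSC V} {L : AbsSC W} [DecidableEq W] {f : V → W}
    (hf : IsSimplicial K L f) : Contig K L f f :=
  ⟨hf, hf, fun σ hσ => by rw [Finset.union_self]; exact hf σ hσ⟩

lemma image_fst_image_prodMap [DecidableEq V] [DecidableEq V'] [DecidableEq W']
    (σ : Finset (V × W)) (f : V → V') (g : W → W') :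
    (σ.image (Prod.map f g)).image Prod.fst = (σ.image Prod.fst).image f := by
  rw [Finset.image_image, Finset.image_image]
  rfl

lemma image_snd_image_prodMap [DecidableEq W] [DecidableEq V'] [DecidableEq W']
    (σ : Finset (V × W)) (f : V → V') (g : W → W') :
    (σ.image (Prod.map f g)).image Prod.snd = (σ.image Prod.snd).image g := by
  rw [Finset.image_image, Finset.image_image]
  rfl

section Product

variable [DecidableEq V] [DecidableEq W] [DecidableEq V'] [DecidableEq W']
  {A : AbsSC V} {K : AbsSC V'} {B : AbsSC W} {L : AbsSC W'}

lemma IsSimplicial.prodMap {f : V → V'} {g : W → W'} (hf : IsSimplicial A K f)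
    (hg : IsSimplicial B L g) : IsSimplicial (A.prod B) (K.prod L) (Prod.map f g) :=
  fun σ hσ => ⟨hσ.1.image _,
    by rw [image_fst_image_prodMap]; exact hf _ hσ.2.1,
    by rw [image_snd_image_prodMap]; exact hg _ hσ.2.2⟩

lemma Contig.prodMap {f f' : V → V'} {g g' : W → W'} (hf : Contig A K f f')
    (hg : Contig B L g g') : Contig (A.prod B) (K.prod L) (Prod.map f g) (Prod.map f' g') :=
  ⟨hf.1.prodMap hg.1, hf.2.1.prodMap hg.2.1, fun σ hσ =>
    ⟨(hσ.1.image _).mono Finset.subset_union_left,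
      by rw [Finset.image_union, image_fst_image_prodMap, image_fst_image_prodMap]
         exact hf.2.2 _ hσ.2.1,
      by rw [Finset.image_union, image_snd_image_prodMap, image_snd_image_prodMap]
         exact hg.2.2 _ hσ.2.2⟩⟩

lemma ContigClass.prodMap_left {f f' : V → V'} {g : W → W'} (hf : ContigClass A K f f')
    (hg : IsSimplicial B L g) :
    ContigClass (A.prod B) (K.prod L) (Prod.map f g) (Prod.map f' g) :=
  hf.lift (fun f => Prod.map f g) fun _ _ h => h.prodMap hg.contig_self

lemma ContigClass.prodMap_right {f : V → V'} {g g' : W → W'} (hf : IsSimplicial A K f)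
    (hg : ContigClass B L g g') :
    ContigClass (A.prod B) (K.prod L) (Prod.map f g) (Prod.map f g') :=
  hg.lift (fun g => Prod.map f g) fun _ _ h => hf.contig_self.prodMap h

end Product

variable [DecidableEq V] [DecidableEq W]

lemma singleton_mem_prod_faces {K : AbsSC V} {L : AbsSC W} {v : V} {w : W}
    (hv : {v} ∈ K.faces) (hw : {w} ∈ L.faces) : {(v, w)} ∈ (K.prod L).faces :=
  ⟨Finset.singleton_nonempty _, by simpa using hv, by simpa using hw⟩

lemma faces_nonempty_of_prod {K : AbsSC V} {L : AbsSC W} (h : (K.prod L).faces.Nonempty) :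
    K.faces.Nonempty ∧ L.faces.Nonempty :=
  let ⟨_, hσ⟩ := h
  ⟨⟨_, hσ.2.1⟩, ⟨_, hσ.2.2⟩⟩

lemma Categorical.prod {K A : AbsSC V} {L B : AbsSC W} (hA : Categorical K A)
    (hB : Categorical L B) : Categorical (K.prod L) (A.prod B) := by
  obtain ⟨hAK, v, hv, hAv⟩ := hA
  obtain ⟨hBL, w, hw, hBw⟩ := hB
  refine ⟨fun σ hσ => ⟨hσ.1, hAK hσ.2.1, hBL hσ.2.2⟩, (v, w),
    singleton_mem_prod_faces hv hw, ?_⟩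
  have hincl : IsSimplicial B L id := fun σ hσ => by rw [Finset.image_id]; exact hBL hσ
  have hconst : IsSimplicial A K (fun _ => v) := fun σ hσ => by
    rw [Finset.image_const (A.nonempty_of_mem σ hσ)]; exact hv
  exact (hAv.prodMap_left hincl).trans (hBw.prodMap_right hconst)

def simplex (σ : Finset V) : AbsSC V where
  faces := {τ | τ.Nonempty ∧ τ ⊆ σ}
  nonempty_of_mem := fun _ h => h.1
  down_closed := fun _ h _ hρ hne => ⟨hne, hρ.trans h.2⟩

lemma categorical_simplex {K : AbsSC V} {σ : Finset V} (hσ : σ ∈ K.faces) :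
    Categorical K (simplex σ) := by
  obtain ⟨v, hv⟩ := K.nonempty_of_mem σ hσ
  have hsub : ∀ τ ∈ (simplex σ).faces, τ ∈ K.faces :=
    fun τ hτ => K.down_closed σ hσ τ hτ.2 hτ.1
  have hvK : {v} ∈ K.faces :=
    hsub _ ⟨Finset.singleton_nonempty v, Finset.singleton_subset_iff.2 hv⟩
  refine ⟨hsub, v, hvK, .single ⟨?_, ?_, fun τ hτ => ?_⟩⟩
  · exact fun τ hτ => by rw [Finset.image_id]; exact hsub τ hτ
  · exact fun τ hτ => by rw [Finset.image_const hτ.1]; exact hvK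
  · rw [Finset.image_id, Finset.image_const hτ.1]
    exact K.down_closed σ hσ _ (Finset.union_subset hτ.2 (Finset.singleton_subset_iff.2 hv))
      (hτ.1.mono Finset.subset_union_left)

lemma catCover_of_cover {K : AbsSC V} {ι : Type*} [Finite ι] {n : ℕ} (U : ι → AbsSC V)
    (hU : ∀ i, Categorical K (U i)) (hcover : ∀ σ ∈ K.faces, ∃ i, σ ∈ (U i).faces)
    (hcard : Nat.card ι = n + 1) : CatCover K n := by
  let e : ι ≃ Fin (n + 1) := (Finite.equivFin ι).trans (finCongr hcard)
  refine ⟨U ∘ e.symm, fun i => hU _, fun σ hσ => ?_⟩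
  obtain ⟨i, hi⟩ := hcover σ hσ
  exact ⟨e i, by simpa using hi⟩

lemma exists_catCover [Finite V] {K : AbsSC V} (h : K.faces.Nonempty) : ∃ n, CatCover K n := by
  have : Nonempty K.faces := h.to_subtype
  have hpos : 0 < Nat.card K.faces := Nat.card_pos
  exact ⟨_, catCover_of_cover (fun σ : K.faces => simplex σ.1)
    (fun σ => categorical_simplex σ.2)
    (fun σ hσ => ⟨⟨σ, hσ⟩, K.nonempty_of_mem σ hσ, subset_rfl⟩)
    (Nat.sub_add_cancel hpos).symm⟩

lemma catCover_scat [Finite V] {K : AbsSC V} (h : K.faces.Nonempty) : CatCover K (scat K) :=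
  Nat.sInf_mem (exists_catCover h)

lemma scat_le_of_catCover {K : AbsSC V} {n : ℕ} (h : CatCover K n) : scat K ≤ n :=
  Nat.sInf_le h

-- The empty complex has no categorical cover at all, so its `scat` is the junk value `sInf ∅`.
lemma scat_eq_zero_of_not_nonempty {K : AbsSC V} (h : ¬ K.faces.Nonempty) : scat K = 0 := by
  have hnone : {n | CatCover K n} = ∅ :=
    Set.eq_empty_of_forall_notMem fun _ ⟨_, hU, _⟩ => h ⟨_, ((hU 0).2.choose_spec).1⟩
  rw [scat, hnone, Nat.sInf_empty]

lemma CatCover.prod {K : AbsSC V} {L : AbsSC W} {m n : ℕ} (hK : CatCover K m)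
    (hL : CatCover L n) : CatCover (K.prod L) (m * n + m + n) := by
  obtain ⟨U, hU, hUcover⟩ := hK
  obtain ⟨U', hU', hU'cover⟩ := hL
  refine catCover_of_cover (fun ij : Fin (m + 1) × Fin (n + 1) => (U ij.1).prod (U' ij.2))
    (fun ij => (hU ij.1).prod (hU' ij.2)) (fun σ hσ => ?_) 
    (by rw [Nat.card_prod, Nat.card_fin, Nat.card_fin]; ring)
  obtain ⟨i, hi⟩ := hUcover _ hσ.2.1
  obtain ⟨j, hj⟩ := hU'cover _ hσ.2.2
  exact ⟨(i, j), hσ.1, hi, hj⟩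

end AbsSC

/-- `scat (K × L) + 1 ≤ (scat K + 1)(scat L + 1)` for the
categorical product. -/
theorem scat_prod_le {V W : Type} [DecidableEq V] [DecidableEq W]
    [Fintype V] [Fintype W] (K : AbsSC V) (L : AbsSC W) :
    AbsSC.scat (K.prod L) + 1 ≤ (AbsSC.scat K + 1) * (AbsSC.scat L + 1) := by
  open AbsSC in
  by_cases h : (K.prod L).faces.Nonempty
  · obtain ⟨hK, hL⟩ := faces_nonempty_of_prod h
    have hle := scat_le_of_catCover ((catCover_scat hK).prod (catCover_scat hL))
    calc scat (K.prod L) + 1 ≤ scat K * scat L + scat K + scat L + 1 := by omega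
      _ = (scat K + 1) * (scat L + 1) := by ring
  · rw [scat_eq_zero_of_not_nonempty h, Nat.add_one_le_iff]
    positivity
end
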